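/- The map φ_⧢ : A_z^0 → A_z^0 defined by φ_⧢(w) = Σ_{r≥0} Σ_{b_1,…,b_r ∈ {0,z}} Const(∂_{1,b_1}···∂_{1,b_r} w) ⧢ e_{b_1}···e_{b_r} is a ring endomorphism of (A_z^0, ⧢): φ_⧢(u ⧢ v) = φ_⧢(u) ⧢ φ_⧢(v). -/

import Mathlib

open scoped BigOperators

/-- Letters: `0 ↦ e₀`, `1 ↦ e₁`, `2 ↦ e_z`. -/
abbrev Letter := Fin 3

/-- The free noncommutative ring `𝒜_z = ℤ⟨e₀, e₁, e_z⟩`. -/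
abbrev Az := MonoidAlgebra ℤ (FreeMonoid Letter)

/-- The monomial (word) corresponding to a list of letters. -/
noncomputable def wordOf (l : List Letter) : Az :=
  MonoidAlgebra.single (FreeMonoid.ofList l) 1

/-- The extended sequence `a₀ = 0, a₁, …, a_n, a_{n+1} = 1`. -/
def ext (a : List Letter) (j : ℕ) : Letter :=
  ((0 : Letter) :: a ++ [1]).getD j 1

/-- `∂_{α,β}` on a word. -/
noncomputable def Dword (α β : Letter) (a : List Letter) : Az :=
  ∑ i ∈ Finset.range a.length,
    (((if ({ext a (i + 1), ext a (i + 2)} : Finset Letter) = {α, β} then 1 else 0)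
      - (if ({ext a i, ext a (i + 1)} : Finset Letter) = {α, β} then 1 else 0) : ℤ))
      • wordOf (a.eraseIdx i)

/-- The linear operator `∂_{α,β} : 𝒜_z → 𝒜_z`. -/
noncomputable def del (α β : Letter) : Az →ₗ[ℤ] Az :=
  (Finsupp.lsum ℤ fun w => LinearMap.toSpanSingleton ℤ Az (Dword α β (FreeMonoid.toList w))) ∘ₗ (MonoidAlgebra.coeffLinearEquiv ℤ).toLinearMap

/-- The shuffle product of two words. -/
noncomputable def shuffleWord : List Letter → List Letter → Az
  | [], v => wordOf v
  | u, [] => wordOf u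
  | a :: u, b :: v =>
      wordOf [a] * shuffleWord u (b :: v) + wordOf [b] * shuffleWord (a :: u) v
termination_by u v => u.length + v.length

/-- The shuffle product as a bilinear map on `𝒜_z`. -/
noncomputable def sh : Az →ₗ[ℤ] Az →ₗ[ℤ] Az :=
  (Finsupp.lsum ℤ fun u => LinearMap.toSpanSingleton ℤ (Az →ₗ[ℤ] Az)
    ((Finsupp.lsum ℤ fun v =>
      LinearMap.toSpanSingleton ℤ Az (shuffleWord (FreeMonoid.toList u) (FreeMonoid.toList v))) ∘ₗ (MonoidAlgebra.coeffLinearEquiv ℤ).toLinearMap)) ∘ₗ (MonoidAlgebra.coeffLinearEquiv ℤ).toLinearMap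

/-- The (generalized) stuffle product of two words (the left word should lie in `𝒜`). -/
noncomputable def stWord : List Letter → List Letter → Az
  | [], v => wordOf v
  | u, [] => wordOf u
  | a :: u, b :: v =>
      if a = 0 then wordOf [0] * stWord u (b :: v)
      else if a = 1 then
        wordOf [b] * (stWord u (b :: v) + stWord (a :: u) v - wordOf [0] * stWord u v)
      else 0
termination_by u v => u.length + v.length

/-- The stuffle product as a bilinear map. -/
noncomputable def st : Az →ₗ[ℤ] Az →ₗ[ℤ] Az :=
  (Finsupp.lsum ℤ fun u => LinearMap.toSpanSingleton ℤ (Az →ₗ[ℤ] Az)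
    ((Finsupp.lsum ℤ fun v =>
      LinearMap.toSpanSingleton ℤ Az (stWord (FreeMonoid.toList u) (FreeMonoid.toList v))) ∘ₗ (MonoidAlgebra.coeffLinearEquiv ℤ).toLinearMap)) ∘ₗ (MonoidAlgebra.coeffLinearEquiv ℤ).toLinearMap

/-- `Const` kills every word containing the letter `e_z`. -/
noncomputable def Const : Az →ₗ[ℤ] Az :=
  (Finsupp.lsum ℤ fun w => LinearMap.toSpanSingleton ℤ Az
    (if (2 : Letter) ∈ FreeMonoid.toList w then 0 else wordOf (FreeMonoid.toList w))) ∘ₗ (MonoidAlgebra.coeffLinearEquiv ℤ).toLinearMap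

/-- `τ_z` on letters. -/
noncomputable def tauLetter (a : Letter) : Az :=
  if a = 0 then wordOf [2] - wordOf [1]
  else if a = 1 then wordOf [2] - wordOf [0]
  else wordOf [2]

/-- `τ_z` on a word (reversing the word). -/
noncomputable def tauWord : List Letter → Az
  | [] => 1
  | a :: u => tauWord u * tauLetter a

/-- The duality anti-automorphism `τ_z`. -/
noncomputable def tau : Az →ₗ[ℤ] Az :=
  (Finsupp.lsum ℤ fun w => LinearMap.toSpanSingleton ℤ Az (tauWord (FreeMonoid.toList w))) ∘ₗ (MonoidAlgebra.coeffLinearEquiv ℤ).toLinearMap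

/-- `𝒜_z^0`: span of the empty word and of words beginning with `e₁` or `e_z`
and ending in `e₀` or `e_z`. -/
noncomputable def Az0 : Submodule ℤ Az :=
  Submodule.span ℤ {x | ∃ l : List Letter,
    (l = [] ∨ (l.head? ≠ some 0 ∧ l.getLast? ≠ some 1)) ∧ x = wordOf l}

/-- `𝒜_z^1`: span of the empty word and of words beginning with `e₁` or `e_z`. -/
noncomputable def Az1 : Submodule ℤ Az :=
  Submodule.span ℤ {x | ∃ l : List Letter, l.head? ≠ some 0 ∧ x = wordOf l}

/-- `𝒜 = ℤ⟨e₀, e₁⟩` inside `𝒜_z`. -/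
noncomputable def Asub : Submodule ℤ Az :=
  Submodule.span ℤ {x | ∃ l : List Letter, (2 : Letter) ∉ l ∧ x = wordOf l}

/-- `𝒜^1 = ℤ ⊕ e₁𝒜`. -/
noncomputable def A1sub : Submodule ℤ Az :=
  Submodule.span ℤ {x | ∃ l : List Letter,
    ((2 : Letter) ∉ l ∧ l.head? ≠ some 0 ∧ l.head? ≠ some 2) ∧ x = wordOf l}

/-- `𝒜^0 = ℤ ⊕ e₁𝒜e₀`. -/
noncomputable def A0sub : Submodule ℤ Az :=
  Submodule.span ℤ {x | ∃ l : List Letter,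
    ((2 : Letter) ∉ l ∧ (l = [] ∨ (l.head? = some 1 ∧ l.getLast? = some 0))) ∧ x = wordOf l}

/-- `𝒜_z^{-2} = ℤ ⊕ e₁𝒜_z e₀ ⊕ e_z 𝒜_z e₀`. -/
noncomputable def Azm2 : Submodule ℤ Az :=
  Submodule.span ℤ {x | ∃ l : List Letter,
    (l = [] ∨ (l.head? ≠ some 0 ∧ l.getLast? = some 0)) ∧ x = wordOf l}

/-- `𝒜_z^0 ∩ ℤ⟨e₁, e_z⟩`. -/
noncomputable def Wsub : Submodule ℤ Az :=
  Submodule.span ℤ {x | ∃ l : List Letter,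
    ((0 : Letter) ∉ l ∧ (l = [] ∨ l.getLast? = some 2)) ∧ x = wordOf l}

/-- `ℤ⟨e_z⟩`: span of powers of `e_z`. -/
noncomputable def Zez : Submodule ℤ Az :=
  Submodule.span ℤ {x | ∃ k : ℕ, x = wordOf (List.replicate k 2)}

/-- `𝒜_z^{-1} = 𝒜_z^{-2}·ℤ⟨e_z⟩`. -/
noncomputable def Azm1 : Submodule ℤ Az :=
  Submodule.span ℤ {x | ∃ l : List Letter, ∃ k : ℕ,
    (l = [] ∨ (l.head? ≠ some 0 ∧ l.getLast? = some 0)) ∧ x = wordOf (l ++ List.replicate k 2)}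

/-- `ℤ⟨e₀, e_z⟩ ∩ 𝒜_z^0`. -/
noncomputable def Vsub : Submodule ℤ Az :=
  Submodule.span ℤ {x | ∃ l : List Letter,
    ((1 : Letter) ∉ l ∧ (l = [] ∨ l.head? = some 2)) ∧ x = wordOf l}

/-- All lists of length `r` with entries in `{e₀, e_z}`. -/
def tuples : ℕ → List (List Letter)
  | 0 => [[]]
  | n + 1 => (tuples n).flatMap fun t => [(0 : Letter) :: t, (2 : Letter) :: t]

/-- `∂_{1,b₁} ∘ ⋯ ∘ ∂_{1,b_r}` for `bs = [b₁, …, b_r]`. -/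
noncomputable def delChain : List Letter → Az →ₗ[ℤ] Az
  | [] => LinearMap.id
  | b :: bs => (del 1 b).comp (delChain bs)

/-- `∂_{z,α₁} ∘ ⋯ ∘ ∂_{z,α_r}` for `as = [α₁, …, α_r]`. -/
noncomputable def delZChain : List Letter → Az →ₗ[ℤ] Az
  | [] => LinearMap.id
  | a :: as => (del 2 a).comp (delZChain as)

/-- `φ_⧢` on a word. -/
noncomputable def phiShWord (l : List Letter) : Az :=
  ∑ r ∈ Finset.range (l.length + 1),
    ((tuples r).map fun b => sh (Const (delChain b (wordOf l))) (wordOf b)).sum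

/-- `φ_⧢ : 𝒜_z^0 → 𝒜_z^0` (defined on all of `𝒜_z`). -/
noncomputable def phiSh : Az →ₗ[ℤ] Az :=
  (Finsupp.lsum ℤ fun w => LinearMap.toSpanSingleton ℤ Az (phiShWord (FreeMonoid.toList w))) ∘ₗ (MonoidAlgebra.coeffLinearEquiv ℤ).toLinearMap

/-- `φ_*` on a word. -/
noncomputable def phiStWord (l : List Letter) : Az :=
  ∑ r ∈ Finset.range (l.length + 1),
    ((tuples r).map fun b => st (Const (delChain b (wordOf l))) (wordOf b)).sum

/-- `φ_* : 𝒜_z^0 → 𝒜_z^0` (defined on all of `𝒜_z`). -/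
noncomputable def phiSt : Az →ₗ[ℤ] Az :=
  (Finsupp.lsum ℤ fun w => LinearMap.toSpanSingleton ℤ Az (phiStWord (FreeMonoid.toList w))) ∘ₗ (MonoidAlgebra.coeffLinearEquiv ℤ).toLinearMap

/-- `φ_⊗` on a word. -/
noncomputable def phiTWord (l : List Letter) : TensorProduct ℤ Az Az :=
  ∑ r ∈ Finset.range (l.length + 1),
    ((tuples r).map fun b => (Const (delChain b (wordOf l))) ⊗ₜ[ℤ] (wordOf b)).sum

/-- `φ_⊗ : 𝒜_z^0 → 𝒜^0 ⊗ ℤ⟨e₀, e_z⟩` (defined on all of `𝒜_z`). -/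
noncomputable def phiT : Az →ₗ[ℤ] TensorProduct ℤ Az Az :=
  (Finsupp.lsum ℤ fun w => LinearMap.toSpanSingleton ℤ (TensorProduct ℤ Az Az)
    (phiTWord (FreeMonoid.toList w))) ∘ₗ (MonoidAlgebra.coeffLinearEquiv ℤ).toLinearMap

/-- The `i`-fold shuffle power of `e₁`. -/
noncomputable def e1pow : ℕ → Az
  | 0 => 1
  | n + 1 => sh (wordOf [1]) (e1pow n)

/-- Substitution `z → 1` on words. -/
noncomputable def subst1 : Az →ₗ[ℤ] Az :=
  (Finsupp.lsum ℤ fun w => LinearMap.toSpanSingleton ℤ Az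
    (wordOf ((FreeMonoid.toList w).map fun a => if a = 2 then 1 else a))) ∘ₗ (MonoidAlgebra.coeffLinearEquiv ℤ).toLinearMap

/-!
`∂_{α,β}` is a derivation of `⧢`. On a word `a w` it yields the terms for the pairs `(c, a)` and
`(a, first letter of w)`, where `c` is the left neighbour of `a`, plus `a ∂(w)` computed with left
neighbour `a`; so the derivation property is proved by induction on both words of a shuffle,
for every left neighbour at once. `Const` is a `⧢`-morphism as well. Hence
`∂_{1,b₁} ⋯ ∂_{1,b_r} (u ⧢ v)` is a sum over the ways of splitting `b₁ ⋯ b_r` into two subwords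
`(s, t)`. Summed over all words `b`, this becomes a sum over all pairs `(s, t)` and all
interleavings of `s` and `t` (shuffle is dual to unshuffle), i.e. the sum of
`(Const ∂_s u ⧢ Const ∂_t v) ⧢ (s ⧢ t)`, which is `φ_⧢(u) ⧢ φ_⧢(v)`. So `φ_⧢` is multiplicative
on all of `𝒜_z`.

`𝒜_z^0` is stable: `∂_{1,β}` preserves it (erasing a letter takes a word out of `𝒜_z^0` only if
the two neighbours of that letter in `e₀ w e₁` agree, and then its coefficient vanishes),
`Const ∘ ∂_{1,0}` kills it (on words in `e₀, e₁` the sum telescopes to the two boundary terms),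
and the remaining terms are shuffles with words `e_z ⋯` ending in `e₀` or `e_z`.
-/

open Finset

section Words

noncomputable def wordBasis : Module.Basis (List Letter) ℤ Az :=
  (MonoidAlgebra.basis (FreeMonoid Letter) ℤ).reindex FreeMonoid.toList

@[simp] lemma wordBasis_apply (l : List Letter) : wordBasis l = wordOf l := by
  rw [wordBasis, Module.Basis.reindex_apply, MonoidAlgebra.basis_apply]
  rfl

@[elab_as_elim]
lemma wordOf_induction {P : Az → Prop} (word : ∀ l, P (wordOf l))
    (add : ∀ x y, P x → P y → P (x + y)) (smul : ∀ (n : ℤ) x, P x → P (n • x)) (x : Az) :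
    P x := by
  have hx : x ∈ Submodule.span ℤ (Set.range wordBasis) := by simp
  induction hx using Submodule.span_induction with
  | mem _ h => obtain ⟨l, rfl⟩ := h; simpa using word l
  | zero => simpa using smul 0 _ (word [])
  | add x y _ _ hx hy => exact add x y hx hy
  | smul n x _ hx => exact smul n x hx

lemma lsum_apply_wordOf {N : Type*} [AddCommMonoid N] [Module ℤ N] (f : FreeMonoid Letter → N)
    (l : List Letter) :
    (Finsupp.lsum ℤ (fun w => LinearMap.toSpanSingleton ℤ N (f w)) ∘ₗ
      (MonoidAlgebra.coeffLinearEquiv ℤ).toLinearMap) (wordOf l) = f (FreeMonoid.ofList l) := by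
  simp [wordOf]

@[simp] lemma del_wordOf (α β : Letter) (l : List Letter) : del α β (wordOf l) = Dword α β l :=
  lsum_apply_wordOf _ l

@[simp] lemma sh_wordOf (u v : List Letter) : sh (wordOf u) (wordOf v) = shuffleWord u v := by
  rw [sh, lsum_apply_wordOf]
  exact lsum_apply_wordOf _ v

@[simp] lemma Const_wordOf (l : List Letter) :
    Const (wordOf l) = if (2 : Letter) ∈ l then 0 else wordOf l :=
  lsum_apply_wordOf _ l

@[simp] lemma phiSh_wordOf (l : List Letter) : phiSh (wordOf l) = phiShWord l :=
  lsum_apply_wordOf _ l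

@[simp] lemma wordOf_nil : wordOf [] = 1 := rfl

lemma wordOf_cons (a : Letter) (l : List Letter) : wordOf (a :: l) = wordOf [a] * wordOf l := by
  simp [wordOf, MonoidAlgebra.single_mul_single]

end Words

section Shuffle

lemma shuffleWord_nil_left (v : List Letter) : shuffleWord [] v = wordOf v := by
  rw [shuffleWord]

lemma shuffleWord_nil_right (u : List Letter) : shuffleWord u [] = wordOf u := by
  cases u <;> rw [shuffleWord]
  exact List.cons_ne_nil _ _

lemma shuffleWord_cons_cons (a b : Letter) (u v : List Letter) :
    shuffleWord (a :: u) (b :: v) =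
      wordOf [a] * shuffleWord u (b :: v) + wordOf [b] * shuffleWord (a :: u) v := by
  rw [shuffleWord]

@[simp] lemma sh_one_left (x : Az) : sh 1 x = x := by
  induction x using wordOf_induction with
  | word l => rw [← wordOf_nil, sh_wordOf, shuffleWord_nil_left]
  | add x y hx hy => rw [map_add, hx, hy]
  | smul n x hx => rw [map_smul, hx]

@[simp] lemma sh_one_right (x : Az) : sh x 1 = x := by
  induction x using wordOf_induction with
  | word l => rw [← wordOf_nil, sh_wordOf, shuffleWord_nil_right]
  | add x y hx hy => rw [map_add, LinearMap.add_apply, hx, hy]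
  | smul n x hx => rw [map_smul, LinearMap.smul_apply, hx]

lemma sh_cons_cons (a b : Letter) (x y : Az) :
    sh (wordOf [a] * x) (wordOf [b] * y) =
      wordOf [a] * sh x (wordOf [b] * y) + wordOf [b] * sh (wordOf [a] * x) y := by
  induction x using wordOf_induction with
  | word u =>
    induction y using wordOf_induction with
    | word v => simp only [← wordOf_cons, sh_wordOf, shuffleWord_cons_cons]
    | add y z hy hz => simp only [mul_add, map_add, hy, hz]; abel
    | smul n y hy => simp only [mul_smul_comm, map_smul, hy, smul_add]
  | add x z hx hz => simp only [mul_add, map_add, LinearMap.add_apply, hx, hz]; abel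
  | smul n x hx => simp only [mul_smul_comm, map_smul, LinearMap.smul_apply, hx, smul_add]

lemma shuffleWord_comm (u v : List Letter) : shuffleWord u v = shuffleWord v u := by
  induction u, v using shuffleWord.induct with
  | case1 v => rw [shuffleWord_nil_left, shuffleWord_nil_right]
  | case2 u _ => rw [shuffleWord_nil_left, shuffleWord_nil_right]
  | case3 a u b v ih₁ ih₂ => rw [shuffleWord_cons_cons, shuffleWord_cons_cons, ih₁, ih₂, add_comm]

lemma sh_comm (x y : Az) : sh x y = sh y x := by
  have h : sh = sh.flip :=
    LinearMap.ext_basis wordBasis wordBasis fun u v => by simp [shuffleWord_comm u v]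
  exact LinearMap.congr_fun₂ h x y

lemma sh_sh_cons (a b c : Letter) (x y z : Az) :
    sh (sh (wordOf [a] * x) (wordOf [b] * y)) (wordOf [c] * z) =
      wordOf [a] * sh (sh x (wordOf [b] * y)) (wordOf [c] * z) +
      wordOf [b] * sh (sh (wordOf [a] * x) y) (wordOf [c] * z) +
      wordOf [c] * sh (sh (wordOf [a] * x) (wordOf [b] * y)) z := by
  rw [sh_cons_cons a b x y, map_add, LinearMap.add_apply, sh_cons_cons, sh_cons_cons]
  simp only [LinearMap.add_apply, mul_add]
  abel

lemma sh_cons_sh (a b c : Letter) (x y z : Az) :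
    sh (wordOf [a] * x) (sh (wordOf [b] * y) (wordOf [c] * z)) =
      wordOf [a] * sh x (sh (wordOf [b] * y) (wordOf [c] * z)) +
      wordOf [b] * sh (wordOf [a] * x) (sh y (wordOf [c] * z)) +
      wordOf [c] * sh (wordOf [a] * x) (sh (wordOf [b] * y) z) := by
  rw [sh_cons_cons b c y z, map_add, sh_cons_cons, sh_cons_cons]
  simp only [map_add, mul_add]
  abel

lemma sh_assoc_wordOf : ∀ u v w : List Letter,
    sh (sh (wordOf u) (wordOf v)) (wordOf w) = sh (wordOf u) (sh (wordOf v) (wordOf w))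
  | [], v, w => by simp
  | u, [], w => by simp
  | u, v, [] => by simp
  | a :: u, b :: v, c :: w => by
    rw [wordOf_cons a u, wordOf_cons b v, wordOf_cons c w, sh_sh_cons, sh_cons_sh]
    simp only [← wordOf_cons]
    rw [sh_assoc_wordOf u, sh_assoc_wordOf (a :: u) v, sh_assoc_wordOf (a :: u) (b :: v) w]
termination_by u v w => u.length + v.length + w.length

lemma sh_assoc (x y z : Az) : sh (sh x y) z = sh x (sh y z) := by
  induction x using wordOf_induction with
  | word u =>
    induction y using wordOf_induction with
    | word v =>
      induction z using wordOf_induction with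
      | word w => exact sh_assoc_wordOf u v w
      | add z z' h h' => simp only [map_add, h, h']
      | smul n z h => simp only [map_smul, h]
    | add y y' h h' => simp only [map_add, LinearMap.add_apply, h, h']
    | smul n y h => simp only [map_smul, LinearMap.smul_apply, h]
  | add x x' h h' => simp only [map_add, LinearMap.add_apply, h, h']
  | smul n x h => simp only [map_smul, LinearMap.smul_apply, h]

lemma sh_sh_sh_comm (a b c d : Az) : sh (sh a b) (sh c d) = sh (sh a c) (sh b d) := by
  rw [sh_assoc, ← sh_assoc b, sh_comm b c, sh_assoc c, ← sh_assoc a]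

lemma sh_list_sum_left {γ : Type*} (l : List γ) (f : γ → Az) (y : Az) :
    sh (l.map f).sum y = (l.map fun k => sh (f k) y).sum := by
  rw [← LinearMap.flip_apply, map_list_sum, List.map_map]
  rfl

lemma sh_list_sum_right {γ : Type*} (x : Az) (l : List γ) (f : γ → Az) :
    sh x (l.map f).sum = (l.map fun k => sh x (f k)).sum := by
  rw [map_list_sum, List.map_map]
  rfl

end Shuffle

section Interleave

def interleave : List Letter → List Letter → List (List Letter)
  | [], v => [v]
  | u, [] => [u]
  | a :: u, b :: v => (interleave u (b :: v)).map (a :: ·) ++ (interleave (a :: u) v).map (b :: ·)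
termination_by u v => u.length + v.length

lemma interleave_nil_left (v : List Letter) : interleave [] v = [v] := by
  rw [interleave]

lemma interleave_nil_right (u : List Letter) : interleave u [] = [u] := by
  cases u <;> rw [interleave]
  exact List.cons_ne_nil _ _

lemma interleave_cons_cons (a b : Letter) (u v : List Letter) :
    interleave (a :: u) (b :: v) =
      (interleave u (b :: v)).map (a :: ·) ++ (interleave (a :: u) v).map (b :: ·) := by
  rw [interleave]

lemma shuffleWord_eq_sum_interleave (u v : List Letter) :
    shuffleWord u v = ((interleave u v).map wordOf).sum := by
  induction u, v using shuffleWord.induct with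
  | case1 v => simp [shuffleWord_nil_left, interleave_nil_left]
  | case2 u _ => simp [shuffleWord_nil_right, interleave_nil_right]
  | case3 a u b v ih₁ ih₂ =>
    rw [shuffleWord_cons_cons, interleave_cons_cons, ih₁, ih₂, List.map_append, List.sum_append]
    simp only [List.map_map, Function.comp_def, ← List.sum_map_mul_left, ← wordOf_cons]

lemma length_of_mem_interleave {u v k : List Letter} (hk : k ∈ interleave u v) :
    k.length = u.length + v.length := by
  induction u, v using shuffleWord.induct generalizing k with
  | case1 v => simp_all [interleave_nil_left]
  | case2 u _ => simp_all [interleave_nil_right]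
  | case3 a u b v ih₁ ih₂ =>
    rw [interleave_cons_cons] at hk
    simp only [List.mem_append, List.mem_map] at hk
    rcases hk with ⟨k, hk, rfl⟩ | ⟨k, hk, rfl⟩
    · simp [ih₁ hk]; omega
    · simp [ih₂ hk]; omega

lemma head?_of_mem_interleave {u v k : List Letter} (hk : k ∈ interleave u v) :
    k.head? = u.head? ∨ k.head? = v.head? := by
  induction u, v using shuffleWord.induct generalizing k with
  | case1 v => simp_all [interleave_nil_left]
  | case2 u _ => simp_all [interleave_nil_right]
  | case3 a u b v _ _ =>
    rw [interleave_cons_cons] at hk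
    simp only [List.mem_append, List.mem_map] at hk
    rcases hk with ⟨k, hk, rfl⟩ | ⟨k, hk, rfl⟩ <;> simp

lemma getLast?_of_mem_interleave {u v k : List Letter} (hk : k ∈ interleave u v) :
    k.getLast? = u.getLast? ∨ k.getLast? = v.getLast? := by
  induction u, v using shuffleWord.induct generalizing k with
  | case1 v => simp_all [interleave_nil_left]
  | case2 u _ => simp_all [interleave_nil_right]
  | case3 a u b v ih₁ ih₂ =>
    rw [interleave_cons_cons] at hk
    simp only [List.mem_append, List.mem_map] at hk
    rcases hk with ⟨k, hk, rfl⟩ | ⟨k, hk, rfl⟩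
    · rcases ih₁ hk with h | h <;> simp [List.getLast?_cons, h]
    · rcases ih₂ hk with h | h <;> simp [List.getLast?_cons, h]

end Interleave

section Derivation

variable (α β : Letter)

def pairInd (x y : Letter) : ℤ := if ({x, y} : Finset Letter) = {α, β} then 1 else 0

lemma pairInd_comm (x y : Letter) : pairInd α β x y = pairInd α β y x := by
  simp [pairInd, Finset.pair_comm]

/-- `∂_{α,β}` on a word whose left neighbour is `c` rather than `a₀ = 0`. -/
noncomputable def delAfterWord : Letter → List Letter → Az
  | _, [] => 0
  | c, a :: l =>
    (pairInd α β a (l.headD 1) - pairInd α β c a) • wordOf l + wordOf [a] * delAfterWord a l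

lemma delAfterWord_eq_sum (c : Letter) (l : List Letter) :
    delAfterWord α β c l = ∑ i ∈ range l.length,
      (pairInd α β ((c :: l ++ [1]).getD (i + 1) 1) ((c :: l ++ [1]).getD (i + 2) 1) -
        pairInd α β ((c :: l ++ [1]).getD i 1) ((c :: l ++ [1]).getD (i + 1) 1)) •
        wordOf (l.eraseIdx i) := by
  induction l generalizing c with
  | nil => simp [delAfterWord]
  | cons a l ih =>
    rw [delAfterWord, ih a, List.length_cons, sum_range_succ', Finset.mul_sum, add_comm]
    congr 1
    · refine sum_congr rfl fun i _ => ?_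
      rw [mul_smul_comm, ← wordOf_cons]
      rfl
    · cases l <;> rfl

lemma Dword_eq_delAfterWord (l : List Letter) : Dword α β l = delAfterWord α β 0 l :=
  (delAfterWord_eq_sum α β 0 l).symm

noncomputable def delAfter (c : Letter) : Az →ₗ[ℤ] Az := wordBasis.constr ℤ (delAfterWord α β c)

@[simp] lemma delAfter_wordOf (c : Letter) (l : List Letter) :
    delAfter α β c (wordOf l) = delAfterWord α β c l := by
  rw [delAfter, ← wordBasis_apply, Module.Basis.constr_basis]

lemma del_eq_delAfter : del α β = delAfter α β 0 :=
  wordBasis.ext fun l => by simp [Dword_eq_delAfterWord]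

noncomputable def headWeight (a : Letter) : Az →ₗ[ℤ] Az :=
  wordBasis.constr ℤ fun l => pairInd α β a (l.headD 1) • wordOf l

lemma headWeight_wordOf (a : Letter) (l : List Letter) :
    headWeight α β a (wordOf l) = pairInd α β a (l.headD 1) • wordOf l := by
  rw [headWeight, ← wordBasis_apply, Module.Basis.constr_basis, wordBasis_apply]

lemma headWeight_cons_mul (a e : Letter) (x : Az) :
    headWeight α β a (wordOf [e] * x) = pairInd α β a e • (wordOf [e] * x) := by
  induction x using wordOf_induction with
  | word l => rw [← wordOf_cons, headWeight_wordOf, List.headD_cons]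
  | add x y hx hy => rw [mul_add, map_add, hx, hy, smul_add]
  | smul n x hx => rw [mul_smul_comm, map_smul, hx, smul_comm]

lemma delAfter_cons_mul (c a : Letter) (x : Az) :
    delAfter α β c (wordOf [a] * x) =
      headWeight α β a x - pairInd α β c a • x + wordOf [a] * delAfter α β a x := by
  induction x using wordOf_induction with
  | word l =>
    rw [← wordOf_cons, delAfter_wordOf, delAfterWord, headWeight_wordOf, delAfter_wordOf,
      sub_smul]
  | add x y hx hy => simp only [mul_add, map_add, hx, hy, smul_add]; abel
  | smul n x hx => simp only [mul_smul_comm, map_smul, hx, smul_add, smul_sub, smul_comm n]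

/-- The words of `u ⧢ b v` begin with `b` or with the first letter of `u`. -/
lemma headWeight_shuffleWord (a b : Letter) (u v : List Letter) :
    headWeight α β a (shuffleWord u (b :: v)) =
      pairInd α β a (u.headD 1) • shuffleWord u (b :: v) +
        (pairInd α β a b - pairInd α β a (u.headD 1)) • (wordOf [b] * shuffleWord u v) := by
  cases u with
  | nil =>
    simp only [shuffleWord_nil_left, headWeight_wordOf, List.headD_cons, List.headD_nil,
      ← wordOf_cons, ← add_smul]
    congr 1
    ring
  | cons e u =>
    rw [shuffleWord_cons_cons, map_add, headWeight_cons_mul, headWeight_cons_mul, List.headD_cons]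
    module

lemma delAfter_shuffleWord : ∀ (c : Letter) (u v : List Letter),
    delAfter α β c (shuffleWord u v) =
      sh (delAfterWord α β c u) (wordOf v) + sh (wordOf u) (delAfterWord α β c v)
  | c, [], v => by simp [delAfterWord, shuffleWord_nil_left]
  | c, a :: u, [] => by simp [delAfterWord, shuffleWord_nil_right]
  | c, a :: u, b :: v => by
    have ih₁ := delAfter_shuffleWord a u (b :: v)
    have ih₂ := delAfter_shuffleWord b (a :: u) v
    have hw₁ := headWeight_shuffleWord α β a b u v
    have hw₂ := headWeight_shuffleWord α β b a v u
    rw [shuffleWord_comm v, shuffleWord_comm v] at hw₂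
    rw [shuffleWord_cons_cons, map_add, delAfter_cons_mul, delAfter_cons_mul, ih₁, ih₂, hw₁, hw₂]
    simp only [← sh_wordOf]
    simp only [delAfterWord, wordOf_cons a u, wordOf_cons b v, map_add, map_smul,
      LinearMap.add_apply, LinearMap.smul_apply, sh_cons_cons, mul_add, mul_smul_comm]
    rw [pairInd_comm α β b a]
    module
termination_by _ u v => u.length + v.length

lemma del_sh (x y : Az) : del α β (sh x y) = sh (del α β x) y + sh x (del α β y) := by
  have h : sh.compr₂ (delAfter α β 0) =
      sh.compl₁₂ (delAfter α β 0) LinearMap.id + sh.compl₂ (delAfter α β 0) :=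
    LinearMap.ext_basis wordBasis wordBasis fun u v => by simp [delAfter_shuffleWord]
  rw [del_eq_delAfter]
  exact LinearMap.congr_fun₂ h x y

end Derivation

section Const

@[simp] lemma Const_one : Const 1 = 1 := by
  simp [← wordOf_nil]

lemma Const_cons_mul (a : Letter) (x : Az) :
    Const (wordOf [a] * x) = if a = 2 then 0 else wordOf [a] * Const x := by
  induction x using wordOf_induction with
  | word l =>
    simp only [← wordOf_cons, Const_wordOf, List.mem_cons]
    by_cases ha : a = 2 <;> by_cases hl : (2 : Letter) ∈ l <;> simp [ha, hl, eq_comm, ← wordOf_cons]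
  | add x y hx hy => rw [mul_add, map_add, map_add, hx, hy]; split_ifs <;> simp [mul_add]
  | smul n x hx =>
    rw [mul_smul_comm, map_smul, map_smul, hx]
    split_ifs <;> simp only [smul_zero, mul_smul_comm]

lemma Const_shuffleWord : ∀ u v : List Letter,
    Const (shuffleWord u v) = sh (Const (wordOf u)) (Const (wordOf v))
  | [], v => by simp [shuffleWord_nil_left]
  | a :: u, [] => by simp [shuffleWord_nil_right]
  | a :: u, b :: v => by
    rw [shuffleWord_cons_cons, map_add, Const_cons_mul, Const_cons_mul, Const_shuffleWord u,
      Const_shuffleWord (a :: u), wordOf_cons a u, wordOf_cons b v, Const_cons_mul a,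
      Const_cons_mul b]
    split_ifs <;> simp only [sh_cons_cons, map_zero, LinearMap.zero_apply, mul_zero, add_zero]
termination_by u v => u.length + v.length

lemma Const_sh (x y : Az) : Const (sh x y) = sh (Const x) (Const y) := by
  have h : sh.compr₂ Const = sh.compl₁₂ Const Const :=
    LinearMap.ext_basis wordBasis wordBasis fun u v => by simp [Const_shuffleWord]
  exact LinearMap.congr_fun₂ h x y

end Const

section Chains

lemma sum_map_flatMap {γ δ M : Type*} [AddCommMonoid M] (l : List γ) (f : γ → List δ)
    (g : δ → M) : ((l.flatMap f).map g).sum = (l.map fun x => ((f x).map g).sum).sum := by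
  simp [List.flatMap, List.sum_flatten, List.map_flatten, Function.comp_def]

/-- All ways of distributing the letters of a word between two subwords, with multiplicity. -/
def splits : List Letter → List (List Letter × List Letter)
  | [] => [([], [])]
  | d :: ds => (splits ds).flatMap fun p => [(d :: p.1, p.2), (p.1, d :: p.2)]

lemma delChain_sh (bs : List Letter) (x y : Az) :
    delChain bs (sh x y) =
      ((splits bs).map fun p => sh (delChain p.1 x) (delChain p.2 y)).sum := by
  induction bs with
  | nil => simp [delChain, splits]
  | cons b bs ih =>
    simp only [delChain, LinearMap.comp_apply, ih, map_list_sum, splits, sum_map_flatMap,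
      List.map_map]
    congr 1
    refine List.map_congr_left fun p _ => ?_
    simp [del_sh, delChain]

lemma mem_tuples {r : ℕ} {b : List Letter} :
    b ∈ tuples r ↔ b.length = r ∧ ∀ x ∈ b, x = 0 ∨ x = 2 := by
  induction r generalizing b with
  | zero => simp +contextual [tuples, List.length_eq_zero_iff]
  | succ r ih =>
    cases b with
    | nil => simp [tuples]
    | cons a b =>
      simp only [tuples, List.mem_flatMap, ih, List.mem_cons, List.cons.injEq, List.length_cons]
      aesop

lemma tuples_zero : tuples 0 = [[]] := rfl

lemma sum_tuples_succ {M : Type*} [AddCommMonoid M] (r : ℕ) (F : List Letter → M) :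
    ((tuples (r + 1)).map F).sum = ((tuples r).map fun b => F (0 :: b) + F (2 :: b)).sum := by
  simp [tuples, sum_map_flatMap]

end Chains

section Degree

noncomputable def degLE (n : ℕ) : Submodule ℤ Az :=
  Submodule.span ℤ {x | ∃ l : List Letter, l.length ≤ n ∧ x = wordOf l}

lemma wordOf_mem_degLE {l : List Letter} {n : ℕ} (h : l.length ≤ n) : wordOf l ∈ degLE n :=
  Submodule.subset_span ⟨l, h, rfl⟩

lemma degLE_le_comap_del (α β : Letter) (n : ℕ) :
    degLE (n + 1) ≤ (degLE n).comap (del α β) := by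
  refine Submodule.span_le.2 ?_
  rintro _ ⟨l, hl, rfl⟩
  simp only [SetLike.mem_coe, Submodule.mem_comap, del_wordOf, Dword]
  refine Submodule.sum_mem _ fun i hi => Submodule.smul_mem _ _ (wordOf_mem_degLE ?_)
  rw [List.length_eraseIdx_of_lt (mem_range.1 hi)]
  omega

lemma degLE_zero_le_ker_del (α β : Letter) : degLE 0 ≤ LinearMap.ker (del α β) := by
  refine Submodule.span_le.2 ?_
  rintro _ ⟨l, hl, rfl⟩
  rw [List.length_eq_zero_iff.1 (Nat.le_zero.1 hl), SetLike.mem_coe, LinearMap.mem_ker,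
    del_wordOf]
  simp [Dword]

lemma delChain_mem_degLE (bs : List Letter) {n : ℕ} {x : Az} (hx : x ∈ degLE (n + bs.length)) :
    delChain bs x ∈ degLE n := by
  induction bs generalizing n with
  | nil => exact hx
  | cons b bs ih =>
    exact degLE_le_comap_del 1 b n (ih (by simpa [add_assoc, add_comm 1] using hx))

lemma delChain_wordOf_eq_zero {b l : List Letter} (h : l.length < b.length) :
    delChain b (wordOf l) = 0 := by
  obtain ⟨b₀, bs, rfl⟩ := List.exists_cons_of_length_pos (by omega : 0 < b.length)
  have : delChain bs (wordOf l) ∈ degLE 0 :=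
    delChain_mem_degLE bs (wordOf_mem_degLE (by simp at h; omega))
  exact degLE_zero_le_ker_del 1 b₀ this

lemma shuffleWord_mem_degLE (u v : List Letter) :
    shuffleWord u v ∈ degLE (u.length + v.length) := by
  rw [shuffleWord_eq_sum_interleave]
  refine list_sum_mem fun z hz => ?_
  obtain ⟨k, hk, rfl⟩ := List.mem_map.1 hz
  exact wordOf_mem_degLE (length_of_mem_interleave hk).le

end Degree

section Unshuffle

variable {M : Type*} [AddCommMonoid M]

def blockSum (F : List Letter → List Letter → M) (j k : ℕ) : M :=
  ((tuples j).map fun s => ((tuples k).map (F s)).sum).sum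

def splitSum (g : List Letter → List Letter → List Letter → M) (r : ℕ) : M :=
  ((tuples r).map fun b => ((splits b).map fun p => g p.1 p.2 b).sum).sum

def interleaveSum (g : List Letter → List Letter → List Letter → M) (r : ℕ) : M :=
  ∑ jk ∈ antidiagonal r, blockSum (fun s t => ((interleave s t).map (g s t)).sum) jk.1 jk.2

def consLeft (d : Letter) (g : List Letter → List Letter → List Letter → M) :
    List Letter → List Letter → List Letter → M :=
  fun s t k => g (d :: s) t (d :: k)

def consRight (d : Letter) (g : List Letter → List Letter → List Letter → M) :
    List Letter → List Letter → List Letter → M :=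
  fun s t k => g s (d :: t) (d :: k)

lemma splitSum_succ (g : List Letter → List Letter → List Letter → M) (r : ℕ) :
    splitSum g (r + 1) = splitSum (consLeft 0 g) r + splitSum (consLeft 2 g) r +
      (splitSum (consRight 0 g) r + splitSum (consRight 2 g) r) := by
  simp only [splitSum, sum_tuples_succ, splits, sum_map_flatMap, List.map_cons, List.map_nil,
    List.sum_cons, List.sum_nil, add_zero, List.sum_map_add]
  simp only [consLeft, consRight]
  abel

/-- The part of `∑_{k ∈ interleave s t} g s t k` where `k` begins with the first letter of `s`. -/
def leftPart (g : List Letter → List Letter → List Letter → M) : List Letter → List Letter → M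
  | [], _ => 0
  | d :: s, t => ((interleave s t).map (consLeft d g s t)).sum

def rightPart (g : List Letter → List Letter → List Letter → M) : List Letter → List Letter → M
  | _, [] => 0
  | s, e :: t => ((interleave s t).map (consRight e g s t)).sum

lemma sum_interleave_eq_leftPart_add_rightPart (g : List Letter → List Letter → List Letter → M)
    {s t : List Letter} (h : s ≠ [] ∨ t ≠ []) :
    ((interleave s t).map (g s t)).sum = leftPart g s t + rightPart g s t := by
  match s, t with
  | [], [] => simp at h
  | [], e :: t => simp [interleave_nil_left, leftPart, rightPart, consRight]
  | d :: s, [] => simp [interleave_nil_right, leftPart, rightPart, consLeft]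
  | d :: s, e :: t =>
    simp [interleave_cons_cons, leftPart, rightPart, Function.comp_def]
    rfl

lemma sum_blockSum_leftPart (g : List Letter → List Letter → List Letter → M) (r : ℕ) :
    ∑ jk ∈ antidiagonal (r + 1), blockSum (leftPart g) jk.1 jk.2 =
      interleaveSum (consLeft 0 g) r + interleaveSum (consLeft 2 g) r := by
  rw [Nat.sum_antidiagonal_succ, interleaveSum, interleaveSum, ← sum_add_distrib]
  simp only [blockSum, sum_tuples_succ, List.sum_map_add, tuples_zero]
  simp [leftPart]
  rfl

lemma sum_blockSum_rightPart (g : List Letter → List Letter → List Letter → M) (r : ℕ) :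
    ∑ jk ∈ antidiagonal (r + 1), blockSum (rightPart g) jk.1 jk.2 =
      interleaveSum (consRight 0 g) r + interleaveSum (consRight 2 g) r := by
  rw [Nat.sum_antidiagonal_succ', interleaveSum, interleaveSum, ← sum_add_distrib]
  simp only [blockSum, sum_tuples_succ, List.sum_map_add, tuples_zero]
  simp [rightPart]

lemma interleaveSum_succ (g : List Letter → List Letter → List Letter → M) (r : ℕ) :
    interleaveSum g (r + 1) = interleaveSum (consLeft 0 g) r + interleaveSum (consLeft 2 g) r +
      (interleaveSum (consRight 0 g) r + interleaveSum (consRight 2 g) r) := by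
  rw [← sum_blockSum_leftPart, ← sum_blockSum_rightPart, interleaveSum, ← sum_add_distrib]
  refine sum_congr rfl fun jk hjk => ?_
  rw [blockSum, blockSum, blockSum, ← List.sum_map_add]
  refine congrArg List.sum (List.map_congr_left fun s hs => ?_)
  rw [← List.sum_map_add]
  refine congrArg List.sum (List.map_congr_left fun t ht =>
    sum_interleave_eq_leftPart_add_rightPart g ?_)
  have hlen := mem_antidiagonal.1 hjk
  rw [← (mem_tuples.1 hs).1, ← (mem_tuples.1 ht).1] at hlen
  by_contra! h
  simp [h.1, h.2] at hlen

theorem splitSum_eq_interleaveSum (g : List Letter → List Letter → List Letter → M) (r : ℕ) :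
    splitSum g r = interleaveSum g r := by
  induction r generalizing g with
  | zero => simp [splitSum, interleaveSum, blockSum, tuples, splits, interleave_nil_left]
  | succ r ih => rw [splitSum_succ, interleaveSum_succ, ih, ih, ih, ih]

lemma sum_range_sum_antidiagonal_eq (W : ℕ → ℕ → M) {m n : ℕ}
    (hm : ∀ j k, m < j → W j k = 0) (hn : ∀ j k, n < k → W j k = 0) :
    ∑ r ∈ range (m + n + 1), ∑ jk ∈ antidiagonal r, W jk.1 jk.2 =
      ∑ j ∈ range (m + 1), ∑ k ∈ range (n + 1), W j k := by
  rw [sum_sigma', ← sum_product']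
  refine sum_bij_ne_zero (fun x _ _ => x.2) ?_ ?_ ?_ ?_
  · rintro ⟨r, j, k⟩ hx hW
    simp only [mem_sigma, mem_range, HasAntidiagonal.mem_antidiagonal] at hx
    simp only [mem_product, mem_range]
    constructor
    · by_contra h
      exact hW (hm j k (by omega))
    · by_contra h
      exact hW (hn j k (by omega))
  · rintro ⟨r, jk⟩ h₁ _ ⟨r', jk'⟩ h₂ _ rfl
    simp only [mem_sigma, HasAntidiagonal.mem_antidiagonal] at h₁ h₂
    rw [← h₁.2, ← h₂.2]
  · rintro ⟨j, k⟩ hjk hW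
    simp only [mem_product, mem_range] at hjk
    exact ⟨⟨j + k, (j, k)⟩, by simp; omega, hW, rfl⟩
  · intros; rfl

lemma blockSum_eq_zero {F : List Letter → List Letter → M} {j k : ℕ}
    (h : ∀ s ∈ tuples j, ∀ t ∈ tuples k, F s t = 0) : blockSum F j k = 0 :=
  List.sum_eq_zero fun _ hz => by
    obtain ⟨s, hs, rfl⟩ := List.mem_map.1 hz
    exact List.sum_eq_zero fun _ hz' => by
      obtain ⟨t, ht, rfl⟩ := List.mem_map.1 hz'
      exact h s hs t ht

end Unshuffle

section Multiplicativity

noncomputable def phiUpTo (N : ℕ) : Az →ₗ[ℤ] Az :=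
  ∑ r ∈ range (N + 1), ((tuples r).map fun b => sh.flip (wordOf b) ∘ₗ Const ∘ₗ delChain b).sum

lemma phiUpTo_apply (N : ℕ) (x : Az) :
    phiUpTo N x = ∑ r ∈ range (N + 1),
      ((tuples r).map fun b => sh (Const (delChain b x)) (wordOf b)).sum := by
  rw [phiUpTo, LinearMap.sum_apply]
  refine sum_congr rfl fun r _ => ?_
  rw [← LinearMap.applyₗ_apply_apply (R := ℤ), map_list_sum, List.map_map]
  rfl

lemma phiSh_eq_phiUpTo {N : ℕ} {x : Az} (hx : x ∈ degLE N) : phiSh x = phiUpTo N x := by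
  suffices degLE N ≤ LinearMap.eqLocus phiSh (phiUpTo N) from this hx
  refine Submodule.span_le.2 ?_
  rintro _ ⟨l, hl, rfl⟩
  rw [SetLike.mem_coe, LinearMap.mem_eqLocus, phiSh_wordOf, phiShWord, phiUpTo_apply]
  refine sum_subset (range_subset_range.2 (by omega)) fun r _ hr => ?_
  refine List.sum_eq_zero fun z hz => ?_
  obtain ⟨b, hb, rfl⟩ := List.mem_map.1 hz
  rw [delChain_wordOf_eq_zero (by rw [(mem_tuples.1 hb).1]; simp at hr; omega)]
  simp

noncomputable def crossTerm (p q s t : List Letter) : Az :=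
  sh (Const (delChain s (wordOf p))) (Const (delChain t (wordOf q)))

lemma phiSh_shuffleWord (p q : List Letter) :
    phiSh (shuffleWord p q) = ∑ r ∈ range (p.length + q.length + 1),
      interleaveSum (fun s t k => sh (crossTerm p q s t) (wordOf k)) r := by
  rw [phiSh_eq_phiUpTo (shuffleWord_mem_degLE p q), phiUpTo_apply]
  refine sum_congr rfl fun r _ => ?_
  rw [← splitSum_eq_interleaveSum, splitSum]
  refine congrArg List.sum (List.map_congr_left fun b _ => ?_)
  rw [← sh_wordOf, delChain_sh, map_list_sum, List.map_map, sh_list_sum_left]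
  simp only [Function.comp_apply, Const_sh, crossTerm]

lemma sh_phiSh_phiSh (p q : List Letter) :
    sh (phiSh (wordOf p)) (phiSh (wordOf q)) =
      ∑ j ∈ range (p.length + 1), ∑ k ∈ range (q.length + 1),
        blockSum (fun s t => sh (crossTerm p q s t) (shuffleWord s t)) j k := by
  rw [phiSh_wordOf, phiSh_wordOf, phiShWord, phiShWord, LinearMap.map_sum₂]
  refine sum_congr rfl fun j _ => ?_
  rw [map_sum]
  refine sum_congr rfl fun k _ => ?_
  rw [sh_list_sum_left]
  refine congrArg List.sum (List.map_congr_left fun s _ => ?_)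
  rw [sh_list_sum_right]
  refine congrArg List.sum (List.map_congr_left fun t _ => ?_)
  rw [sh_sh_sh_comm, sh_wordOf]
  rfl

lemma blockSum_crossTerm_eq_zero {p q : List Letter} {j k : ℕ}
    (h : p.length < j ∨ q.length < k) :
    blockSum (fun s t => sh (crossTerm p q s t) (shuffleWord s t)) j k = 0 := by
  refine blockSum_eq_zero fun s hs t ht => ?_
  rw [← (mem_tuples.1 hs).1, ← (mem_tuples.1 ht).1] at h
  rcases h with h | h <;> simp [crossTerm, delChain_wordOf_eq_zero h]

lemma phiSh_sh_wordOf (p q : List Letter) :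
    phiSh (sh (wordOf p) (wordOf q)) = sh (phiSh (wordOf p)) (phiSh (wordOf q)) := by
  rw [sh_wordOf, phiSh_shuffleWord, sh_phiSh_phiSh]
  simp only [interleaveSum, ← sh_list_sum_right, ← shuffleWord_eq_sum_interleave]
  exact sum_range_sum_antidiagonal_eq _ (fun _ _ hj => blockSum_crossTerm_eq_zero (.inl hj))
    (fun _ _ hk => blockSum_crossTerm_eq_zero (.inr hk))

lemma phiSh_sh (x y : Az) : phiSh (sh x y) = sh (phiSh x) (phiSh y) := by
  have h : sh.compr₂ phiSh = sh.compl₁₂ phiSh phiSh :=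
    LinearMap.ext_basis wordBasis wordBasis fun u v => by simpa using phiSh_sh_wordOf u v
  exact LinearMap.congr_fun₂ h x y

end Multiplicativity

section Az0

lemma wordOf_mem_Az0 {l : List Letter} (h0 : l.head? ≠ some 0) (h1 : l.getLast? ≠ some 1) :
    wordOf l ∈ Az0 :=
  Submodule.subset_span ⟨l, Or.inr ⟨h0, h1⟩, rfl⟩

lemma head?_getLast?_of_Az0 {l : List Letter}
    (hl : l = [] ∨ (l.head? ≠ some 0 ∧ l.getLast? ≠ some 1)) :
    l.head? ≠ some 0 ∧ l.getLast? ≠ some 1 := by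
  rcases hl with rfl | hl
  · simp
  · exact hl

lemma Az0_le {p : Submodule ℤ Az}
    (hp : ∀ l : List Letter, l.head? ≠ some 0 → l.getLast? ≠ some 1 → wordOf l ∈ p) : Az0 ≤ p := by
  refine Submodule.span_le.2 ?_
  rintro _ ⟨l, hl, rfl⟩
  exact hp l (head?_getLast?_of_Az0 hl).1 (head?_getLast?_of_Az0 hl).2

lemma ext_succ (l : List Letter) (j : ℕ) : _root_.ext l (j + 1) = l.getD j 1 := by
  rw [_root_.ext, List.cons_append, List.getD_cons_succ]
  by_cases h : j < l.length
  · rw [List.getD_append _ _ _ _ h]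
  · rw [List.getD_append_right _ _ _ _ (by omega), List.getD_eq_default l _ (by omega)]
    rcases Nat.eq_or_lt_of_le (not_lt.1 h) with h' | h'
    · simp [← h']
    · rw [List.getD_eq_default _ _ (by simp; omega)]

/-- Erasing a letter keeps a word in `𝒜_z^0` unless its two neighbours in `e₀ w e₁` coincide. -/
lemma eraseIdx_head?_getLast? {l : List Letter} (h0 : l.head? ≠ some 0) (h1 : l.getLast? ≠ some 1)
    {i : ℕ} (hi : i < l.length) (hne : _root_.ext l i ≠ _root_.ext l (i + 2)) :
    (l.eraseIdx i).head? ≠ some 0 ∧ (l.eraseIdx i).getLast? ≠ some 1 := by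
  constructor
  · rw [List.head?_eq_getElem?, List.getElem?_eraseIdx]
    split_ifs with hi0
    · rwa [← List.head?_eq_getElem?]
    · obtain rfl : i = 0 := by omega
      intro h
      exact hne (by rw [ext_succ, List.getD_eq_getElem?_getD, h]; rfl)
  · rw [List.getLast?_eq_getElem?, List.getElem?_eraseIdx, List.length_eraseIdx_of_lt hi]
    split_ifs with hlt
    · intro h
      obtain ⟨j, rfl⟩ : ∃ j, i = j + 1 := ⟨i - 1, by omega⟩
      refine hne ?_
      rw [ext_succ, ext_succ, List.getD_eq_getElem?_getD, show j = l.length - 1 - 1 by omega, h,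
        List.getD_eq_default _ _ (by omega)]
      rfl
    · rcases Nat.lt_or_ge l.length 2 with hn | hn
      · simp [List.getElem?_eq_none (by omega : l.length ≤ l.length - 1 - 1 + 1)]
      · rwa [show l.length - 1 - 1 + 1 = l.length - 1 by omega, ← List.getLast?_eq_getElem?]

lemma del_mem_Az0 (α β : Letter) {x : Az} (hx : x ∈ Az0) : del α β x ∈ Az0 := by
  refine Az0_le (p := Az0.comap _) (fun l h0 h1 => ?_) hx
  rw [Submodule.mem_comap, del_wordOf, Dword]
  refine Submodule.sum_mem _ fun i hi => ?_
  by_cases hne : _root_.ext l i = _root_.ext l (i + 2)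
  · rw [hne, Finset.pair_comm, sub_self, zero_smul]
    exact zero_mem _
  · obtain ⟨h0', h1'⟩ := eraseIdx_head?_getLast? h0 h1 (mem_range.1 hi) hne
    exact Submodule.smul_mem _ _ (wordOf_mem_Az0 h0' h1')

lemma delChain_mem_Az0 (bs : List Letter) {x : Az} (hx : x ∈ Az0) : delChain bs x ∈ Az0 := by
  induction bs with
  | nil => exact hx
  | cons b bs ih => exact del_mem_Az0 1 b ih

lemma Const_mem_Az0 {x : Az} (hx : x ∈ Az0) : Const x ∈ Az0 := by
  refine Az0_le (p := Az0.comap _) (fun l h0 h1 => ?_) hx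
  rw [Submodule.mem_comap, Const_wordOf]
  split_ifs
  exacts [zero_mem _, wordOf_mem_Az0 h0 h1]

lemma shuffleWord_mem_Az0 {u v : List Letter} (hu0 : u.head? ≠ some 0) (hu1 : u.getLast? ≠ some 1)
    (hv0 : v.head? ≠ some 0) (hv1 : v.getLast? ≠ some 1) : shuffleWord u v ∈ Az0 := by
  rw [shuffleWord_eq_sum_interleave]
  refine list_sum_mem fun z hz => ?_
  obtain ⟨k, hk, rfl⟩ := List.mem_map.1 hz
  refine wordOf_mem_Az0 ?_ ?_
  · rcases head?_of_mem_interleave hk with h | h <;> rwa [h]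
  · rcases getLast?_of_mem_interleave hk with h | h <;> rwa [h]

lemma sh_mem_Az0 {x y : Az} (hx : x ∈ Az0) (hy : y ∈ Az0) : sh x y ∈ Az0 := by
  suffices Submodule.map₂ sh Az0 Az0 ≤ Az0 from this (Submodule.apply_mem_map₂ sh hx hy)
  rw [Az0, Submodule.map₂_span_span, Submodule.span_le]
  rintro _ ⟨_, ⟨u, hu, rfl⟩, _, ⟨v, hv, rfl⟩, rfl⟩
  obtain ⟨hu0, hu1⟩ := head?_getLast?_of_Az0 hu
  obtain ⟨hv0, hv1⟩ := head?_getLast?_of_Az0 hv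
  change sh (wordOf u) (wordOf v) ∈ Az0
  rw [sh_wordOf]
  exact shuffleWord_mem_Az0 hu0 hu1 hv0 hv1

lemma pairInd_one_zero_two_left (y : Letter) : pairInd 1 0 2 y = 0 := by
  revert y; decide

lemma pairInd_one_zero_two_right (x : Letter) : pairInd 1 0 x 2 = 0 := by
  revert x; decide

lemma pairInd_one_zero_of_ne_two {x y : Letter} (hx : x ≠ 2) (hy : y ≠ 2) :
    pairInd 1 0 x y = if x = y then 0 else 1 := by
  revert x y; decide

lemma Const_delAfterWord_of_two_mem (c : Letter) {l : List Letter} (h : (2 : Letter) ∈ l) :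
    Const (delAfterWord 1 0 c l) = 0 := by
  induction l generalizing c with
  | nil => simp at h
  | cons a l ih =>
    rw [delAfterWord, map_add, map_smul, Const_cons_mul]
    by_cases ha : a = 2
    · simp [ha, pairInd_one_zero_two_left, pairInd_one_zero_two_right]
    · have hl : (2 : Letter) ∈ l := by simpa [Ne.symm ha] using h
      simp [ha, hl, ih a hl]

lemma delAfterWord_one_zero_of_two_not_mem {c a : Letter} {m : List Letter} (hc : c ≠ 2)
    (h : (2 : Letter) ∉ a :: m) :
    delAfterWord 1 0 c (a :: m) = (if c = a then 1 else 0 : ℤ) • wordOf m -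
      (if (a :: m).getLast? = some 1 then 1 else 0 : ℤ) • wordOf (a :: m).dropLast := by
  induction m generalizing c a with
  | nil =>
    have ha : a ≠ 2 := fun h' => h (h' ▸ List.mem_cons_self)
    rw [delAfterWord, delAfterWord, List.headD_nil, pairInd_one_zero_of_ne_two ha (by decide),
      pairInd_one_zero_of_ne_two hc ha]
    split_ifs <;> simp_all
  | cons b m ih =>
    have ha : a ≠ 2 := fun h' => h (h' ▸ List.mem_cons_self)
    have hb : b ≠ 2 := fun h' => h (h' ▸ List.mem_cons_of_mem _ List.mem_cons_self)
    rw [delAfterWord, ih ha (fun h' => h (List.mem_cons_of_mem _ h')), List.headD_cons,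
      pairInd_one_zero_of_ne_two ha hb, pairInd_one_zero_of_ne_two hc ha, List.getLast?_cons_cons,
      List.dropLast_cons_cons, wordOf_cons a (List.dropLast _)]
    by_cases hab : a = b
    · subst hab
      split_ifs <;> simp [← wordOf_cons, mul_sub] <;> abel
    · split_ifs <;> simp [sub_eq_add_neg]

lemma Const_del_one_zero {x : Az} (hx : x ∈ Az0) : Const (del 1 0 x) = 0 := by
  refine Az0_le (p := LinearMap.ker (Const ∘ₗ del 1 0)) (fun l h0 h1 => ?_) hx
  rw [LinearMap.mem_ker, LinearMap.comp_apply, del_wordOf, Dword_eq_delAfterWord]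
  by_cases h2 : (2 : Letter) ∈ l
  · exact Const_delAfterWord_of_two_mem 0 h2
  rcases l with _ | ⟨a, m⟩
  · simp [delAfterWord]
  · rw [delAfterWord_one_zero_of_two_not_mem (by decide) h2, if_neg (by simpa [eq_comm] using h0),
      if_neg h1]
    simp

lemma phiSh_mem_Az0 {x : Az} (hx : x ∈ Az0) : phiSh x ∈ Az0 := by
  refine Az0_le (p := Az0.comap phiSh) (fun l h0 h1 => ?_) hx
  rw [Submodule.mem_comap, phiSh_wordOf, phiShWord]
  refine Submodule.sum_mem _ fun r _ => list_sum_mem fun z hz => ?_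
  obtain ⟨b, hb, rfl⟩ := List.mem_map.1 hz
  have hl : wordOf l ∈ Az0 := wordOf_mem_Az0 h0 h1
  rcases b with _ | ⟨d, bs⟩
  · simpa [delChain] using Const_mem_Az0 hl
  · rcases (mem_tuples.1 hb).2 d List.mem_cons_self with rfl | rfl
    · simp [delChain, Const_del_one_zero (delChain_mem_Az0 bs hl)]
    · refine sh_mem_Az0 (Const_mem_Az0 (delChain_mem_Az0 _ hl)) (wordOf_mem_Az0 (by simp) ?_)
      intro hlast
      exact absurd ((mem_tuples.1 hb).2 1 (List.mem_of_getLast? hlast)) (by decide)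

end Az0

/-- `φ_⧢` is a ring endomorphism of `(𝒜_z^0, ⧢)`. -/
theorem stmt_12 :
    (∀ u ∈ Az0, phiSh u ∈ Az0) ∧
    ∀ u ∈ Az0, ∀ v ∈ Az0, phiSh (sh u v) = sh (phiSh u) (phiSh v) :=
  ⟨fun _ hu => phiSh_mem_Az0 hu, fun u _ v _ => phiSh_sh u v⟩
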